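/- arXiv:1401.3059 — 4 statements merged into one kernel-verified Lean document; each statement's English description precedes it below -/
import Mathlib

section
/- If q_i(t) = T_k(A⃗t)Q_i, i = 1,...,n, solve the generalized n-body equations q̈_i = Σ_{j≠i} m_j (q_j - q_i) ‖q_j - q_i‖^{2a}, then the constant vectors Q_i satisfy 𝐀²Q_i = Σ_{j≠i} m_j (Q_i - Q_j) ‖Q_i - Q_j‖^{2a} for every i. -/
/-!
Since `rot (c * t)` has derivative `c • rot (c * t + π / 2)`, the `n`-th derivative of
`T_k(A⃗t)` scales each block by `Aₛⁿ` and advances its phase by `n π / 2`. At `t = 0` the second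
derivative is therefore `-𝐀²` (as `rot π = -1`), so `q̈ᵢ(0) = -𝐀² Qᵢ` while `qᵢ(0) = Qᵢ`, and the
equations of motion at `t = 0` are the criterion.
-/

open Real Finset Matrix Filter

/-- The 2×2 rotation matrix of angle `t`. -/
noncomputable def rot (t : ℝ) : Matrix (Fin 2) (Fin 2) ℝ :=
  !![Real.cos t, -Real.sin t; Real.sin t, Real.cos t]

/-- The k×k block-diagonal matrix with 2×2 rotation blocks `rot (θ s)`
(and a final diagonal entry 1 if `k` is odd). -/
noncomputable def Tk (k : ℕ) (θ : Fin (k / 2) → ℝ) : Matrix (Fin k) (Fin k) ℝ :=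
  Matrix.of fun i j =>
    if h : (i : ℕ) / 2 = (j : ℕ) / 2 ∧ (i : ℕ) / 2 < k / 2 then
      rot (θ ⟨(i : ℕ) / 2, h.2⟩) ⟨(i : ℕ) % 2, Nat.mod_lt _ (by norm_num)⟩
        ⟨(j : ℕ) % 2, Nat.mod_lt _ (by norm_num)⟩
    else if i = j then 1 else 0

/-- The diagonal matrix `diag (A₁, A₁, ..., A_p, A_p, [0])`. -/
noncomputable def Amat (k : ℕ) (A : Fin (k / 2) → ℝ) : Matrix (Fin k) (Fin k) ℝ :=
  Matrix.diagonal fun i => if h : (i : ℕ) / 2 < k / 2 then A ⟨(i : ℕ) / 2, h⟩ else 0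

/-- Matrix action on Euclidean vectors. -/
noncomputable def mulVecE {k : ℕ} (M : Matrix (Fin k) (Fin k) ℝ)
    (x : EuclideanSpace ℝ (Fin k)) : EuclideanSpace ℝ (Fin k) :=
  WithLp.toLp 2 (M.mulVec x)

/-- The `n`-th derivative of `t ↦ Tk k (fun s => A s * t)` for `n ≥ 1` (at `n = 0` it lacks the
diagonal entry `1` of odd `k`). -/
noncomputable def TkDeriv (k : ℕ) (A : Fin (k / 2) → ℝ) (n : ℕ) (t : ℝ) :
    Matrix (Fin k) (Fin k) ℝ :=
  Matrix.of fun i j =>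
    if h : (i : ℕ) / 2 = (j : ℕ) / 2 ∧ (i : ℕ) / 2 < k / 2 then
      A ⟨(i : ℕ) / 2, h.2⟩ ^ n * rot (A ⟨(i : ℕ) / 2, h.2⟩ * t + n * (π / 2))
        ⟨(i : ℕ) % 2, Nat.mod_lt _ (by norm_num)⟩ ⟨(j : ℕ) % 2, Nat.mod_lt _ (by norm_num)⟩
    else 0

lemma rot_zero : rot 0 = 1 := by
  ext r c; fin_cases r <;> fin_cases c <;> simp [rot]

lemma rot_pi : rot π = -1 := by
  ext r c; fin_cases r <;> fin_cases c <;> simp [rot]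

lemma hasDerivAt_rot_apply (c φ : ℝ) (r s : Fin 2) (t : ℝ) :
    HasDerivAt (fun t => rot (c * t + φ) r s) (c * rot (c * t + φ + π / 2) r s) t := by
  have h : HasDerivAt (fun t => c * t + φ) c t := by
    simpa using ((hasDerivAt_id t).const_mul c).add_const φ
  fin_cases r <;> fin_cases s <;> simp [rot, cos_add_pi_div_two, sin_add_pi_div_two]
  · simpa [mul_comm] using h.cos
  · simpa [mul_comm] using h.sin.fun_neg
  · simpa [mul_comm] using h.sin
  · simpa [mul_comm] using h.cos

lemma Tk_zero (k : ℕ) : Tk k 0 = 1 := by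
  ext i j
  simp only [Tk, Matrix.of_apply, Pi.zero_apply, rot_zero, Matrix.one_apply, Fin.ext_iff]
  split_ifs <;> simp_all
  omega

lemma hasDerivAt_Tk_apply (k : ℕ) (A : Fin (k / 2) → ℝ) (i j : Fin k) (t : ℝ) :
    HasDerivAt (fun t => Tk k (fun s => A s * t) i j) (TkDeriv k A 1 t i j) t := by
  simp only [Tk, TkDeriv, Matrix.of_apply]
  split_ifs
  · simpa using hasDerivAt_rot_apply _ 0 _ _ t
  · exact hasDerivAt_const t 1
  · exact hasDerivAt_const t 0

lemma hasDerivAt_TkDeriv_apply (k : ℕ) (A : Fin (k / 2) → ℝ) (n : ℕ) (i j : Fin k) (t : ℝ) :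
    HasDerivAt (fun t => TkDeriv k A n t i j) (TkDeriv k A (n + 1) t i j) t := by
  simp only [TkDeriv, Matrix.of_apply]
  split_ifs
  · refine ((hasDerivAt_rot_apply _ _ _ _ t).const_mul _).congr_deriv ?_
    rw [Nat.cast_succ, add_one_mul, ← add_assoc, pow_succ, mul_assoc]
  · exact hasDerivAt_const t 0

lemma TkDeriv_two_zero (k : ℕ) (A : Fin (k / 2) → ℝ) : TkDeriv k A 2 0 = -(Amat k A ^ 2) := by
  ext i j
  simp only [TkDeriv, Amat, sq, Matrix.diagonal_mul_diagonal, Matrix.of_apply, Matrix.neg_apply,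
    Matrix.diagonal_apply, mul_zero, zero_add, Nat.cast_ofNat]
  rw [show (2 : ℝ) * (π / 2) = π by ring, rot_pi]
  split_ifs <;> simp_all [Matrix.neg_apply, Matrix.one_apply, Fin.ext_iff] <;> omega

lemma mulVecE_one {k : ℕ} (x : EuclideanSpace ℝ (Fin k)) : mulVecE 1 x = x := by
  simp [mulVecE]

lemma mulVecE_neg {k : ℕ} (M : Matrix (Fin k) (Fin k) ℝ) (x : EuclideanSpace ℝ (Fin k)) :
    mulVecE (-M) x = -mulVecE M x := by
  simp [mulVecE, Matrix.neg_mulVec]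

lemma hasDerivAt_mulVecE {k : ℕ} {M : ℝ → Matrix (Fin k) (Fin k) ℝ}
    {M' : Matrix (Fin k) (Fin k) ℝ} {t : ℝ}
    (hM : ∀ i j, HasDerivAt (fun t => M t i j) (M' i j) t) (x : EuclideanSpace ℝ (Fin k)) :
    HasDerivAt (fun t => mulVecE (M t) x) (mulVecE M' x) t := by
  have hf : HasDerivAt (fun t => (M t).mulVec x) (M'.mulVec x) t := by
    simp only [hasDerivAt_pi, Matrix.mulVec, dotProduct]
    exact fun i => HasDerivAt.fun_sum fun j _ => (hM i j).mul_const (x j)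
  exact (EuclideanSpace.equiv (Fin k) ℝ).symm.toContinuousLinearMap.hasFDerivAt.comp_hasDerivAt t hf

lemma deriv_deriv_mulVecE_Tk (k : ℕ) (A : Fin (k / 2) → ℝ) (x : EuclideanSpace ℝ (Fin k))
    (t : ℝ) :
    deriv (deriv fun t => mulVecE (Tk k (fun s => A s * t)) x) t = mulVecE (TkDeriv k A 2 t) x := by
  have hderiv : deriv (fun t => mulVecE (Tk k (fun s => A s * t)) x) =
      fun t => mulVecE (TkDeriv k A 1 t) x :=
    funext fun t => (hasDerivAt_mulVecE (hasDerivAt_Tk_apply k A · · t) x).deriv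
  rw [hderiv]
  exact (hasDerivAt_mulVecE (hasDerivAt_TkDeriv_apply k A 1 · · t) x).deriv

theorem criterion_of_solution_general {k n : ℕ} (A : Fin (k / 2) → ℝ)
    (m : Fin n → ℝ) (a : ℝ)
    (Q : Fin n → EuclideanSpace ℝ (Fin k))
    (q : Fin n → ℝ → EuclideanSpace ℝ (Fin k))
    (hq : ∀ i t, q i t = mulVecE (Tk k (fun s => A s * t)) (Q i))
    (heq : ∀ i t, deriv (deriv (q i)) t =
      ∑ j ∈ Finset.univ.filter (· ≠ i), (m j * ‖q j t - q i t‖ ^ (2 * a)) • (q j t - q i t)) :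
    ∀ i, mulVecE ((Amat k A) ^ 2) (Q i) =
      ∑ j ∈ Finset.univ.filter (· ≠ i), (m j * ‖Q i - Q j‖ ^ (2 * a)) • (Q i - Q j) := by
  intro i
  have hq0 : ∀ j, q j 0 = Q j := fun j => by
    rw [hq, show (fun s => A s * 0) = 0 from funext fun _ => mul_zero _, Tk_zero, mulVecE_one]
  have h := heq i 0
  simp only [hq0] at h
  rw [funext (hq i), deriv_deriv_mulVecE_Tk, TkDeriv_two_zero, mulVecE_neg, neg_eq_iff_eq_neg,
    ← Finset.sum_neg_distrib] at h
  rw [h]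
  refine Finset.sum_congr rfl fun j _ => ?_
  rw [← smul_neg, neg_sub, norm_sub_rev]

/-- if `q_i(t) = T_k(A⃗t) Q_i` solve the generalized n-body equations, then
the `Q_i` satisfy the relative equilibrium criterion. -/
theorem criterion_of_solution {k n : ℕ} (hn : 3 ≤ n) (A : Fin (k / 2) → ℝ)
    (hA : ∀ s, 0 < A s) (m : Fin n → ℝ) (hm : ∀ i, 0 < m i) (a : ℝ) (ha : a < -1/2)
    (Q : Fin n → EuclideanSpace ℝ (Fin k)) (hQ : ∀ i j, i ≠ j → Q i ≠ Q j)
    (q : Fin n → ℝ → EuclideanSpace ℝ (Fin k))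
    (hq : ∀ i t, q i t = mulVecE (Tk k (fun s => A s * t)) (Q i))
    (heq : ∀ i t, deriv (deriv (q i)) t =
      ∑ j ∈ Finset.univ.filter (· ≠ i), (m j * ‖q j t - q i t‖ ^ (2 * a)) • (q j t - q i t)) :
    ∀ i, mulVecE ((Amat k A) ^ 2) (Q i) =
      ∑ j ∈ Finset.univ.filter (· ≠ i), (m j * ‖Q i - Q j‖ ^ (2 * a)) • (Q i - Q j) :=
  criterion_of_solution_general A m a Q q hq heq
end

section
/- Conversely, if constant vectors Q₁,...,Q_n ∈ ℝ^k satisfy 𝐀²Q_i = Σ_{j≠i} m_j (Q_i - Q_j) ‖Q_i - Q_j‖^{2a} for all i, then q_i(t) = T_k(A⃗t)Q_i solve the generalized n-body equations q̈_i = Σ_{j≠i} m_j (q_j - q_i) ‖q_j - q_i‖^{2a}. -/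
/-!
Write `𝐀 = diag ω` with `ω = blockwise A` and let `J = T_k(π/2, …, π/2)` be the blockwise quarter
turn. Since `rot u = cos u • 1 + sin u • rot (π/2)`, every coordinate of `T_k(A⃗t) Q` has the form
`cos (ω_l t) Q_l + sin (ω_l t) (J Q)_l`, so its second derivative is `-𝐀² T_k(A⃗t) Q`, which equals
`-T_k(A⃗t) 𝐀² Q` because `𝐀` is constant on the blocks of `T_k`. Inserting the criterion, it remains
to pull `T_k(A⃗t)` through the sum, which is legitimate because `T_k(A⃗t)` is linear and orthogonal
(a reindexed block-diagonal matrix of plane rotations), so `‖q_i - q_j‖ = ‖Q_i - Q_j‖`.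
-/

open Real Finset Matrix Filter

def blockEquiv (k : ℕ) : (Fin 2 × Fin (k / 2)) ⊕ Fin (k % 2) ≃ Fin k :=
  ((Equiv.prodComm _ _).trans finProdFinEquiv |>.sumCongr (Equiv.refl _)).trans
    (finSumFinEquiv.trans (finCongr (Nat.div_add_mod' k 2)))

lemma blockEquiv_inl_val {k : ℕ} (p : Fin 2) (s : Fin (k / 2)) :
    (blockEquiv k (.inl (p, s)) : ℕ) = p + 2 * s := by
  simp [blockEquiv]

lemma blockEquiv_inr_val {k : ℕ} (r : Fin (k % 2)) :
    (blockEquiv k (.inr r) : ℕ) = k / 2 * 2 + r := by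
  simp [blockEquiv]

lemma Tk_submatrix_blockEquiv (k : ℕ) (θ : Fin (k / 2) → ℝ) :
    (Tk k θ).submatrix (blockEquiv k) (blockEquiv k) =
      fromBlocks (blockDiagonal fun s => rot (θ s)) 0 0 1 := by
  ext (⟨p, s⟩ | r) (⟨q, s'⟩ | r') <;>
    simp only [submatrix_apply, Tk, of_apply, blockEquiv_inl_val, blockEquiv_inr_val,
      fromBlocks_apply₁₁, fromBlocks_apply₁₂, fromBlocks_apply₂₁, fromBlocks_apply₂₂,
      blockDiagonal_apply, Matrix.zero_apply, one_apply, EmbeddingLike.apply_eq_iff_eq,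
      Sum.inl.injEq, Sum.inr.injEq, Prod.mk.injEq, reduceCtorEq, if_false]
  · by_cases h : s = s'
    · subst h
      rw [dif_pos (by omega), if_pos rfl]
      congr 2 <;> [exact Fin.ext (by dsimp only; omega); omega; omega]
    · rw [dif_neg (fun h' => h (Fin.ext (by omega))), if_neg (fun h' => h h'.2), if_neg h]
  all_goals rw [dif_neg (by omega)]

lemma rot_mem_orthogonalGroup (u : ℝ) : rot u ∈ orthogonalGroup (Fin 2) ℝ := by
  rw [mem_orthogonalGroup_iff']
  ext i j
  fin_cases i <;> fin_cases j <;> simp [rot, mul_apply, Fin.sum_univ_two] <;>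
    nlinarith [sin_sq_add_cos_sq u]

lemma Tk_mem_orthogonalGroup (k : ℕ) (θ : Fin (k / 2) → ℝ) :
    Tk k θ ∈ orthogonalGroup (Fin k) ℝ := by
  have hT : Tk k θ = (fromBlocks (blockDiagonal fun s => rot (θ s)) 0 0 1).submatrix
      (blockEquiv k).symm (blockEquiv k).symm := by
    rw [← Tk_submatrix_blockEquiv, submatrix_submatrix]
    simp
  rw [mem_orthogonalGroup_iff', hT, transpose_submatrix, submatrix_mul_equiv,
    fromBlocks_transpose, fromBlocks_multiply, blockDiagonal_transpose, ← blockDiagonal_mul]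
  simp only [(mem_orthogonalGroup_iff' ..).1 (rot_mem_orthogonalGroup _), transpose_zero,
    transpose_one, Matrix.mul_zero, Matrix.zero_mul, add_zero, zero_add, Matrix.mul_one]
  rw [← Pi.one_def, blockDiagonal_one, fromBlocks_one, submatrix_one_equiv]

lemma mulVecE_eq_toEuclideanCLM {k : ℕ} (M : Matrix (Fin k) (Fin k) ℝ) :
    mulVecE M = toEuclideanCLM (𝕜 := ℝ) M :=
  rfl

lemma norm_mulVecE_of_mem_orthogonalGroup {k : ℕ} {U : Matrix (Fin k) (Fin k) ℝ}
    (hU : U ∈ orthogonalGroup (Fin k) ℝ) (x : EuclideanSpace ℝ (Fin k)) :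
    ‖mulVecE U x‖ = ‖x‖ :=
  ContinuousLinearMap.norm_map_of_mem_unitary (Unitary.map_mem (toEuclideanCLM (𝕜 := ℝ)) hU) x

lemma mulVecE_mulVecE {k : ℕ} (M N : Matrix (Fin k) (Fin k) ℝ) (x : EuclideanSpace ℝ (Fin k)) :
    mulVecE M (mulVecE N x) = mulVecE (M * N) x := by
  simp only [mulVecE, mulVec_mulVec]

section CosSinCurve

variable {ι : Type*} [Fintype ι]

noncomputable def cosSinCurve (ω x y : ι → ℝ) (t : ℝ) : EuclideanSpace ℝ ι :=
  WithLp.toLp 2 fun l => cos (ω l * t) * x l + sin (ω l * t) * y l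

lemma hasDerivAt_cosSinCurve (ω x y : ι → ℝ) (t : ℝ) :
    HasDerivAt (cosSinCurve ω x y) (cosSinCurve ω (ω * y) (-(ω * x)) t) t := by
  have h : HasDerivAt (fun t l => cos (ω l * t) * x l + sin (ω l * t) * y l)
      (fun l => cos (ω l * t) * (ω l * y l) + sin (ω l * t) * -(ω l * x l)) t := by
    refine hasDerivAt_pi.2 fun l => ?_
    have hωt := (hasDerivAt_id' t).const_mul (ω l)
    exact ((hωt.cos.mul_const (x l)).add (hωt.sin.mul_const (y l))).congr_deriv (by ring)
  exact (PiLp.hasFDerivAt_toLp 2 _).comp_hasDerivAt t h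

lemma deriv_deriv_cosSinCurve [DecidableEq ι] (ω x y : ι → ℝ) (t : ℝ) :
    deriv (deriv (cosSinCurve ω x y)) t =
      -WithLp.toLp 2 (diagonal (ω ^ 2) *ᵥ cosSinCurve ω x y t) := by
  have h : deriv (cosSinCurve ω x y) = cosSinCurve ω (ω * y) (-(ω * x)) :=
    funext fun t => (hasDerivAt_cosSinCurve ω x y t).deriv
  rw [h, (hasDerivAt_cosSinCurve _ _ _ t).deriv]
  ext l
  simp only [cosSinCurve, mulVec_diagonal, Pi.mul_apply, Pi.neg_apply, Pi.pow_apply,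
    WithLp.ofLp_neg]
  ring

end CosSinCurve

noncomputable def blockwise {k : ℕ} (θ : Fin (k / 2) → ℝ) (i : Fin k) : ℝ :=
  if h : (i : ℕ) / 2 < k / 2 then θ ⟨(i : ℕ) / 2, h⟩ else 0

lemma Amat_eq_diagonal_blockwise (k : ℕ) (A : Fin (k / 2) → ℝ) :
    Amat k A = diagonal (blockwise A) :=
  rfl

lemma blockwise_eq_of_div_eq {k : ℕ} (θ : Fin (k / 2) → ℝ) {i j : Fin k}
    (h : (i : ℕ) / 2 = (j : ℕ) / 2) : blockwise θ i = blockwise θ j := by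
  simp only [blockwise, h]

lemma blockwise_mul_const {k : ℕ} (θ : Fin (k / 2) → ℝ) (t : ℝ) :
    blockwise (fun s => θ s * t) = fun i => blockwise θ i * t := by
  ext i
  unfold blockwise
  split_ifs <;> simp

lemma rot_eq_cos_add_sin (u : ℝ) : rot u = cos u • 1 + sin u • rot (π / 2) := by
  ext i j
  fin_cases i <;> fin_cases j <;> simp [rot]

lemma Tk_eq_cos_add_sin {k : ℕ} (θ : Fin (k / 2) → ℝ) :
    Tk k θ = diagonal (fun i => cos (blockwise θ i)) +
      diagonal (fun i => sin (blockwise θ i)) * Tk k (fun _ => π / 2) := by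
  ext i j
  rw [Matrix.add_apply, diagonal_mul, diagonal_apply]
  by_cases h : (i : ℕ) / 2 = (j : ℕ) / 2 ∧ (i : ℕ) / 2 < k / 2
  · simp only [Tk, of_apply, dif_pos h, blockwise, dif_pos h.2]
    rw [rot_eq_cos_add_sin]
    have hij : ((i : ℕ) % 2 = (j : ℕ) % 2) = ((i : ℕ) = j) := propext (by omega)
    simp only [Matrix.add_apply, Matrix.smul_apply, one_apply, Fin.ext_iff, smul_eq_mul, hij]
    split_ifs <;> ring
  · simp only [Tk, of_apply, dif_neg h]
    split_ifs with hij
    · subst hij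
      simp [blockwise, show ¬ (i : ℕ) / 2 < k / 2 from fun h' => h ⟨rfl, h'⟩]
    · simp

lemma commute_Tk_Amat {k : ℕ} (θ A : Fin (k / 2) → ℝ) : Commute (Tk k θ) (Amat k A) := by
  ext i j
  rw [Amat_eq_diagonal_blockwise, mul_diagonal, diagonal_mul]
  by_cases h : (i : ℕ) / 2 = (j : ℕ) / 2
  · rw [blockwise_eq_of_div_eq A h, mul_comm]
  · have hij : i ≠ j := fun hij => h (hij ▸ rfl)
    simp [Tk, h, hij]

lemma mulVecE_Tk_eq_cosSinCurve {k : ℕ} (A : Fin (k / 2) → ℝ) (x : EuclideanSpace ℝ (Fin k))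
    (t : ℝ) : mulVecE (Tk k fun s => A s * t) x =
      cosSinCurve (blockwise A) x (Tk k (fun _ => π / 2) *ᵥ x) t := by
  ext l
  rw [Tk_eq_cos_add_sin, blockwise_mul_const]
  simp [mulVecE, cosSinCurve, add_mulVec, ← mulVec_mulVec, mulVec_diagonal]

theorem solution_of_criterion_general {k n : ℕ} (A : Fin (k / 2) → ℝ) (m : Fin n → ℝ) (a : ℝ)
    (Q : Fin n → EuclideanSpace ℝ (Fin k))
    (hcrit : ∀ i, mulVecE ((Amat k A) ^ 2) (Q i) =
      ∑ j ∈ Finset.univ.filter (· ≠ i), (m j * ‖Q i - Q j‖ ^ (2 * a)) • (Q i - Q j))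
    (q : Fin n → ℝ → EuclideanSpace ℝ (Fin k))
    (hq : ∀ i t, q i t = mulVecE (Tk k (fun s => A s * t)) (Q i)) :
    ∀ i t, deriv (deriv (q i)) t =
      ∑ j ∈ Finset.univ.filter (· ≠ i), (m j * ‖q j t - q i t‖ ^ (2 * a)) • (q j t - q i t) := by
  intro i t
  have hacc : deriv (deriv (q i)) t =
      -mulVecE (Tk k fun s => A s * t) (mulVecE (Amat k A ^ 2) (Q i)) := by
    have hqi : q i = cosSinCurve (blockwise A) (Q i) (Tk k (fun _ => π / 2) *ᵥ Q i) :=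
      funext fun t => (hq i t).trans (mulVecE_Tk_eq_cosSinCurve A (Q i) t)
    rw [hqi, deriv_deriv_cosSinCurve, ← mulVecE_Tk_eq_cosSinCurve, ← diagonal_pow,
      ← Amat_eq_diagonal_blockwise]
    change -mulVecE (Amat k A ^ 2) (mulVecE _ (Q i)) = _
    rw [mulVecE_mulVecE, mulVecE_mulVecE, ((commute_Tk_Amat _ A).pow_right 2).eq]
  have hdist : ∀ j, ‖q j t - q i t‖ = ‖Q i - Q j‖ := fun j => by
    rw [hq, hq, mulVecE_eq_toEuclideanCLM, ← map_sub, ← mulVecE_eq_toEuclideanCLM,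
      norm_mulVecE_of_mem_orthogonalGroup (Tk_mem_orthogonalGroup k _), norm_sub_rev]
  simp only [hacc, hcrit i, hdist]
  simp only [hq, mulVecE_eq_toEuclideanCLM, map_sum, map_smul, map_sub, ← sum_neg_distrib,
    ← smul_neg, neg_sub]

/-- conversely, if the `Q_i` satisfy the relative equilibrium criterion, then
`q_i(t) = T_k(A⃗t) Q_i` solve the generalized n-body equations. -/
theorem solution_of_criterion {k n : ℕ} (hn : 3 ≤ n) (A : Fin (k / 2) → ℝ)
    (hA : ∀ s, 0 < A s) (m : Fin n → ℝ) (hm : ∀ i, 0 < m i) (a : ℝ) (ha : a < -1/2)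
    (Q : Fin n → EuclideanSpace ℝ (Fin k)) (hQ : ∀ i j, i ≠ j → Q i ≠ Q j)
    (hcrit : ∀ i, mulVecE ((Amat k A) ^ 2) (Q i) =
      ∑ j ∈ Finset.univ.filter (· ≠ i), (m j * ‖Q i - Q j‖ ^ (2 * a)) • (Q i - Q j))
    (q : Fin n → ℝ → EuclideanSpace ℝ (Fin k))
    (hq : ∀ i t, q i t = mulVecE (Tk k (fun s => A s * t)) (Q i)) :
    ∀ i t, deriv (deriv (q i)) t =
      ∑ j ∈ Finset.univ.filter (· ≠ i), (m j * ‖q j t - q i t‖ ^ (2 * a)) • (q j t - q i t) :=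
  solution_of_criterion_general A m a Q hcrit q hq
end

section
/- Let Q₁,...,Q_n ∈ ℝ^k be pairwise distinct points satisfying the relative equilibrium criterion 𝐀²Q_i = Σ_{j≠i} m_j (Q_i - Q_j)‖Q_i - Q_j‖^{2a}. Then for any 2 ≤ l ≤ n, writing R_{il} = Σ_{j=l+1}^{n} m_j (Q_i - Q_j)‖Q_i - Q_j‖^{2a}, one has 𝐀² Σ_{i=2}^{l} m_i (Q₁ - Q_i) = (Σ_{i=1}^{l} m_i) Σ_{j=2}^{l} m_j (Q₁ - Q_j)‖Q₁ - Q_j‖^{2a} + Σ_{i=2}^{l} m_i (R_{1l} - R_{il}). -/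
open Real Finset Matrix Filter

/-!
Apply `𝐀²` to each `Q₁ - Q_i` and split every equilibrium equation into the forces exerted by
the bodies `1, …, l` and the remainder `R_i`. Weighted by the masses, the mutual forces inside the
cluster `1, …, l` are antisymmetric in the pair of bodies and cancel, so only the total mass times
the cluster's force on `Q₁` and the remainders survive.
-/

namespace Finset

theorem sum_sum_eq_zero_of_antisymm {ι M : Type*} [AddCommGroup M] [IsAddTorsionFree M]
    (s : Finset ι) {G : ι → ι → M} (hG : ∀ i j, G j i = -G i j) :
    ∑ i ∈ s, ∑ j ∈ s, G i j = 0 := by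
  rw [← self_eq_neg]
  nth_rw 2 [sum_comm]
  simp only [← sum_neg_distrib]
  exact sum_congr rfl fun i _ => sum_congr rfl fun j _ => hG j i

theorem sum_erase_Icc_eq_add_sum_Icc {M : Type*} [AddCommMonoid M] (f : ℕ → M) {b i l n : ℕ}
    (hbl : b ≤ l + 1) (hil : i ≤ l) (hln : l ≤ n) :
    ∑ j ∈ (Icc b n).erase i, f j =
      ∑ j ∈ (Icc b l).erase i, f j + ∑ j ∈ Icc (l + 1) n, f j := by
  rw [← sum_union]
  · congr 1
    ext j
    simp only [mem_erase, mem_Icc, mem_union]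
    omega
  · rw [disjoint_left]
    intro j hj hj'
    simp only [mem_erase, mem_Icc] at hj hj'
    omega

end Finset

section WeightedForces

variable {ι R V : Type*} [DecidableEq ι] [CommRing R] [AddCommGroup V] [Module R V]
  (m : ι → R) {w : ι → ι → R} (Q : ι → V)

/-- Newton's third law: the forces `(m i * m j * w i j) • (Q i - Q j)` are antisymmetric. -/
theorem sum_smul_sum_erase_smul_sub_eq_zero [IsAddTorsionFree V] (hw : ∀ i j, w i j = w j i)
    (s : Finset ι) :
    ∑ i ∈ s, m i • ∑ j ∈ s.erase i, (m j * w i j) • (Q i - Q j) = 0 := by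
  have hdiag : ∀ i, ∑ j ∈ s.erase i, (m j * w i j) • (Q i - Q j) =
      ∑ j ∈ s, (m j * w i j) • (Q i - Q j) := fun i =>
    sum_erase s (by rw [sub_self, smul_zero])
  simp only [hdiag, smul_sum, smul_smul]
  refine sum_sum_eq_zero_of_antisymm s fun i j => ?_
  rw [hw, ← neg_sub, smul_neg, mul_left_comm]

theorem map_sum_erase_smul_sub_eq [IsAddTorsionFree V] (hw : ∀ i j, w i j = w j i)
    (f : V →ₗ[R] V) {s : Finset ι} {F : ι → V}
    (hcrit : ∀ i ∈ s, f (Q i) = ∑ j ∈ s.erase i, (m j * w i j) • (Q i - Q j) + F i)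
    {i₀ : ι} (hi₀ : i₀ ∈ s) :
    f (∑ i ∈ s.erase i₀, m i • (Q i₀ - Q i)) =
      (∑ i ∈ s, m i) • ∑ j ∈ s.erase i₀, (m j * w i₀ j) • (Q i₀ - Q j) +
        ∑ i ∈ s.erase i₀, m i • (F i₀ - F i) := by
  set S : ι → V := fun i => ∑ j ∈ s.erase i, (m j * w i j) • (Q i - Q j)
  have hself : ∀ c : ι → R, ∀ P : ι → V, ∑ i ∈ s.erase i₀, c i • (P i₀ - P i) =
      ∑ i ∈ s, c i • (P i₀ - P i) := fun c P =>
    sum_erase s (by rw [sub_self, smul_zero])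
  rw [hself m Q, hself m F]
  calc f (∑ i ∈ s, m i • (Q i₀ - Q i))
      = ∑ i ∈ s, m i • ((S i₀ + F i₀) - (S i + F i)) := by
        simp only [map_sum, map_smul, map_sub]
        exact sum_congr rfl fun i hi => by rw [hcrit i₀ hi₀, hcrit i hi]
    _ = (∑ i ∈ s, m i) • S i₀ - ∑ i ∈ s, m i • S i +
          ∑ i ∈ s, m i • (F i₀ - F i) := by
        simp only [smul_sub, smul_add, sum_sub_distrib, sum_add_distrib, sum_smul]
        abel
    _ = (∑ i ∈ s, m i) • S i₀ + ∑ i ∈ s, m i • (F i₀ - F i) := by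
        rw [sum_smul_sum_erase_smul_sub_eq_zero m Q hw s, sub_zero]

end WeightedForces

theorem mulVecE_eq_toEuclideanLin {k : ℕ} (M : Matrix (Fin k) (Fin k) ℝ)
    (x : EuclideanSpace ℝ (Fin k)) : mulVecE M x = Matrix.toEuclideanLin M x :=
  rfl

theorem winning_identity_general {k n : ℕ} (A : Fin (k / 2) → ℝ)
    (m : ℕ → ℝ) (a : ℝ)
    (Q : ℕ → EuclideanSpace ℝ (Fin k))
    (hcrit : ∀ i ∈ Finset.Icc 1 n, mulVecE ((Amat k A) ^ 2) (Q i) =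
      ∑ j ∈ (Finset.Icc 1 n).erase i, (m j * ‖Q i - Q j‖ ^ (2 * a)) • (Q i - Q j))
    (l : ℕ) (hl2 : 2 ≤ l) (hln : l ≤ n)
    (R : ℕ → EuclideanSpace ℝ (Fin k))
    (hR : ∀ i, R i = ∑ j ∈ Finset.Icc (l + 1) n,
      (m j * ‖Q i - Q j‖ ^ (2 * a)) • (Q i - Q j)) :
    mulVecE ((Amat k A) ^ 2) (∑ i ∈ Finset.Icc 2 l, m i • (Q 1 - Q i)) =
      (∑ i ∈ Finset.Icc 1 l, m i) •
        ∑ j ∈ Finset.Icc 2 l, (m j * ‖Q 1 - Q j‖ ^ (2 * a)) • (Q 1 - Q j) +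
      ∑ i ∈ Finset.Icc 2 l, m i • (R 1 - R i) := by
  have hcrit_l : ∀ i ∈ Icc 1 l, toEuclideanLin (Amat k A ^ 2) (Q i) =
      ∑ j ∈ (Icc 1 l).erase i, (m j * ‖Q i - Q j‖ ^ (2 * a)) • (Q i - Q j) + R i := by
    intro i hi
    rw [← mulVecE_eq_toEuclideanLin, hcrit i (Icc_subset_Icc_right hln hi),
      sum_erase_Icc_eq_add_sum_Icc _ (by omega) (mem_Icc.1 hi).2 hln, hR]
  have h1 : 1 ∈ Icc 1 l := mem_Icc.2 ⟨le_rfl, by omega⟩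
  have hw : ∀ i j, ‖Q i - Q j‖ ^ (2 * a) = ‖Q j - Q i‖ ^ (2 * a) := fun i j => by
    rw [norm_sub_rev]
  have : IsAddTorsionFree (EuclideanSpace ℝ (Fin k)) := .of_module_rat _
  have h := map_sum_erase_smul_sub_eq m Q hw _ hcrit_l h1
  rwa [Icc_erase_left, ← Icc_add_one_left_eq_Ioc, ← mulVecE_eq_toEuclideanLin] at h

/-- the "winning identity" (Lemma 2 of the paper). -/
theorem winning_identity {k n : ℕ} (A : Fin (k / 2) → ℝ) (hA : ∀ s, 0 < A s)
    (m : ℕ → ℝ) (hm : ∀ i ∈ Finset.Icc 1 n, 0 < m i) (a : ℝ) (ha : a < -1/2)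
    (Q : ℕ → EuclideanSpace ℝ (Fin k))
    (hdist : ∀ i ∈ Finset.Icc 1 n, ∀ j ∈ Finset.Icc 1 n, i ≠ j → Q i ≠ Q j)
    (hcrit : ∀ i ∈ Finset.Icc 1 n, mulVecE ((Amat k A) ^ 2) (Q i) =
      ∑ j ∈ (Finset.Icc 1 n).erase i, (m j * ‖Q i - Q j‖ ^ (2 * a)) • (Q i - Q j))
    (l : ℕ) (hl2 : 2 ≤ l) (hln : l ≤ n)
    (R : ℕ → EuclideanSpace ℝ (Fin k))
    (hR : ∀ i, R i = ∑ j ∈ Finset.Icc (l + 1) n,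
      (m j * ‖Q i - Q j‖ ^ (2 * a)) • (Q i - Q j)) :
    mulVecE ((Amat k A) ^ 2) (∑ i ∈ Finset.Icc 2 l, m i • (Q 1 - Q i)) =
      (∑ i ∈ Finset.Icc 1 l, m i) •
        ∑ j ∈ Finset.Icc 2 l, (m j * ‖Q 1 - Q j‖ ^ (2 * a)) • (Q 1 - Q j) +
      ∑ i ∈ Finset.Icc 2 l, m i • (R 1 - R i) :=
  winning_identity_general A m a Q hcrit l hl2 hln R hR
end

section
/- Fix a rotation vector A⃗ ∈ ℝ_{>0}^p and masses m₁,...,m_n > 0, and let a < -1/2. Then there exists c > 0 such that for every relative equilibrium configuration Q₁,...,Q_n ∈ ℝ^k (i.e., pairwise distinct points satisfying 𝐀²Q_i = Σ_{j≠i} m_j (Q_i - Q_j)‖Q_i - Q_j‖^{2a} for all i), one has ‖Q_i - Q_j‖ > c for all i ≠ j. -/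
open Real Finset Matrix Filter

/-!
Write the equilibrium as `L Q_i = ∑_j m_j ‖Q_i - Q_j‖^(2a) (Q_i - Q_j)` with `L = 𝐀²`; only the
linearity and boundedness of `L` matter. Let `S` be a cluster of the points, of diameter `D` and
separated from the other points by a gap `g`, and let `M = ∑ m_i`. Pair the equation of `i ∈ S`
with `m_i w_i`, `w_i = ∑_{l ∈ S} m_l (Q_i - Q_l)`, and sum over `S`. By linearity of `L` the left
side is `½ ∑ m_i m_l ⟪L (Q_i - Q_l), Q_i - Q_l⟫ ≤ ‖L‖ (m(S) D)² / 2`. On the right, by Newton's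
third law the forces inside `S` contribute `½ m(S) ∑ m_i m_j ‖Q_i - Q_j‖^(2a+2)`, which dominates
any single pair, while, as `2a + 1 < 0`, the forces across the gap contribute at least
`-m(S)² M g^(2a+1) D`.

Given two points at distance `r`, some annulus `C_s r < ‖Q_l - Q_i‖ ≤ C_{s+1} r`, `s ≤ n`,
around the first one contains no point; this gives a cluster with `D ≤ 2 C_s r` and
`g = (C_{s+1} - C_s) r`.
The radii grow fast enough for the gap term to be at most half of the pair term, and what remains
is `(min m)² r^(2a) ≤ 4 M ‖L‖ C_n²`, a bound on `r^(2a)` independent of `Q`.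
-/

open RealInnerProductSpace

section Clusters

variable {ι E : Type*} [NormedAddCommGroup E] [InnerProductSpace ℝ E]

noncomputable def pairForce (m : ι → ℝ) (a : ℝ) (Q : ι → E) (i j : ι) : E :=
  (m j * ‖Q i - Q j‖ ^ (2 * a)) • (Q i - Q j)

/-- The term `j = i` of the sum vanishes, so it does not need to be excluded. -/
def IsRelEquilibrium [Fintype ι] (L : E →L[ℝ] E) (m : ι → ℝ) (a : ℝ) (Q : ι → E) : Prop :=
  ∀ i, L (Q i) = ∑ j, pairForce m a Q i j

/-- `(∑ l ∈ S, m l) • (Q i - c)`, where `c` is the centre of mass of the cluster `S`. -/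
def clusterOffset (m : ι → ℝ) (Q : ι → E) (S : Finset ι) (i : ι) : E :=
  ∑ l ∈ S, m l • (Q i - Q l)

variable {m : ι → ℝ} {a : ℝ} {Q : ι → E} {S : Finset ι}

lemma inner_clusterOffset (x : E) (i : ι) :
    ⟪x, clusterOffset m Q S i⟫ = ∑ l ∈ S, m l * ⟪x, Q i - Q l⟫ := by
  simp only [clusterOffset, inner_sum, real_inner_smul_right]

lemma clusterOffset_sub (i j : ι) :
    clusterOffset m Q S i - clusterOffset m Q S j = (∑ l ∈ S, m l) • (Q i - Q j) := by
  simp only [clusterOffset, ← sum_sub_distrib, ← smul_sub, sum_smul]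
  congr! 2
  abel

lemma norm_clusterOffset_le {i : ι} {D : ℝ} (hm : ∀ l ∈ S, 0 ≤ m l)
    (hD : ∀ l ∈ S, ‖Q i - Q l‖ ≤ D) :
    ‖clusterOffset m Q S i‖ ≤ (∑ l ∈ S, m l) * D :=
  calc ‖clusterOffset m Q S i‖ ≤ ∑ l ∈ S, ‖m l • (Q i - Q l)‖ := norm_sum_le _ _
    _ ≤ ∑ l ∈ S, m l * D := by
      gcongr with l hl
      rw [norm_smul, Real.norm_of_nonneg (hm l hl)]
      exact mul_le_mul_of_nonneg_left (hD l hl) (hm l hl)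
    _ = (∑ l ∈ S, m l) * D := (sum_mul ..).symm

/-- Newton's third law, tested against two vectors. -/
lemma mul_inner_pairForce_add (i j : ι) (x y : E) :
    m i * ⟪pairForce m a Q i j, x⟫ + m j * ⟪pairForce m a Q j i, y⟫ =
      m i * m j * ‖Q i - Q j‖ ^ (2 * a) * ⟪Q i - Q j, x - y⟫ := by
  simp only [pairForce, real_inner_smul_left, inner_sub_right, ← neg_sub (Q i) (Q j),
    inner_neg_left, norm_neg]
  ring

lemma norm_pairForce_le {i j : ι} {g : ℝ} (hm : 0 ≤ m j) (ha : 2 * a + 1 ≤ 0) (hg : 0 < g)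
    (hgij : g ≤ ‖Q i - Q j‖) : ‖pairForce m a Q i j‖ ≤ m j * g ^ (2 * a + 1) := by
  have hij : ‖Q i - Q j‖ ≠ 0 := (hg.trans_le hgij).ne'
  rw [pairForce, norm_smul, Real.norm_of_nonneg (by positivity), mul_assoc,
    ← Real.rpow_add_one hij]
  exact mul_le_mul_of_nonneg_left (Real.rpow_le_rpow_of_nonpos hg hgij ha) hm

lemma two_mul_sum_sum_eq (f : ι → ι → ℝ) (S : Finset ι) :
    2 * ∑ i ∈ S, ∑ j ∈ S, f i j = ∑ i ∈ S, ∑ j ∈ S, (f i j + f j i) := by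
  simp only [sum_add_distrib]
  rw [sum_comm (f := fun i j => f j i)]
  ring

lemma two_mul_sum_inner_clusterOffset_le (L : E →L[ℝ] E) {D : ℝ} (hm : ∀ i ∈ S, 0 ≤ m i)
    (hD : ∀ i ∈ S, ∀ j ∈ S, ‖Q i - Q j‖ ≤ D) :
    2 * ∑ i ∈ S, m i * ⟪L (Q i), clusterOffset m Q S i⟫ ≤ ‖L‖ * ((∑ i ∈ S, m i) * D) ^ 2 := by
  have hquad (x : E) : ⟪L x, x⟫ ≤ ‖L‖ * ‖x‖ ^ 2 :=
    calc ⟪L x, x⟫ ≤ ‖L x‖ * ‖x‖ := real_inner_le_norm _ _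
      _ ≤ ‖L‖ * ‖x‖ * ‖x‖ := by gcongr; exact L.le_opNorm x
      _ = ‖L‖ * ‖x‖ ^ 2 := by ring
  calc 2 * ∑ i ∈ S, m i * ⟪L (Q i), clusterOffset m Q S i⟫
      = 2 * ∑ i ∈ S, ∑ j ∈ S, m i * m j * ⟪L (Q i), Q i - Q j⟫ := by
        simp only [inner_clusterOffset, mul_sum, mul_assoc]
    _ = ∑ i ∈ S, ∑ j ∈ S, m i * m j * ⟪L (Q i - Q j), Q i - Q j⟫ := by
        rw [two_mul_sum_sum_eq]
        refine sum_congr rfl fun i _ => sum_congr rfl fun j _ => ?_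
        rw [map_sub, inner_sub_left, ← neg_sub (Q i) (Q j), inner_neg_right]
        ring
    _ ≤ ∑ i ∈ S, ∑ j ∈ S, m i * m j * (‖L‖ * D ^ 2) := by
        gcongr with i hi j hj
        · exact mul_nonneg (hm i hi) (hm j hj)
        · exact (hquad _).trans (by gcongr; exact hD i hi j hj)
    _ = ‖L‖ * ((∑ i ∈ S, m i) * D) ^ 2 := by
        simp only [← sum_mul, ← mul_sum]
        ring

lemma mul_le_sum_sum_mul_inner_pairForce {i₀ j₀ : ι} (hm : ∀ i ∈ S, 0 ≤ m i) (hi₀ : i₀ ∈ S)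
    (hj₀ : j₀ ∈ S) (hij : i₀ ≠ j₀) :
    (∑ l ∈ S, m l) * (m i₀ * m j₀ * (‖Q i₀ - Q j₀‖ ^ (2 * a) * ‖Q i₀ - Q j₀‖ ^ 2)) ≤
      ∑ i ∈ S, ∑ j ∈ S, m i * ⟪pairForce m a Q i j, clusterOffset m Q S i⟫ := by
  set U : ι × ι → ℝ := fun p =>
    (∑ l ∈ S, m l) * (m p.1 * m p.2 * (‖Q p.1 - Q p.2‖ ^ (2 * a) * ‖Q p.1 - Q p.2‖ ^ 2))
  have hU : ∀ p ∈ S ×ˢ S, 0 ≤ U p := fun p hp => by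
    obtain ⟨h1, h2⟩ := mem_product.mp hp
    positivity [sum_nonneg hm, hm _ h1, hm _ h2]
  have hsym : 2 * ∑ i ∈ S, ∑ j ∈ S, m i * ⟪pairForce m a Q i j, clusterOffset m Q S i⟫ =
      ∑ i ∈ S, ∑ j ∈ S, U (i, j) := by
    rw [two_mul_sum_sum_eq]
    refine sum_congr rfl fun i _ => sum_congr rfl fun j _ => ?_
    rw [mul_inner_pairForce_add, clusterOffset_sub, real_inner_smul_right,
      real_inner_self_eq_norm_sq]
    ring
  have hpair : U (i₀, j₀) + U (j₀, i₀) ≤ ∑ i ∈ S, ∑ j ∈ S, U (i, j) :=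
    (add_le_sum hU (mk_mem_product hi₀ hj₀) (mk_mem_product hj₀ hi₀)
      fun h => hij (Prod.ext_iff.mp h).1).trans_eq (sum_product ..)
  have hswap : U (j₀, i₀) = U (i₀, j₀) := by simp only [U, norm_sub_rev (Q j₀)]; ring
  linarith

lemma neg_le_sum_sum_compl_mul_inner_pairForce [Fintype ι] [DecidableEq ι] {g D : ℝ}
    (hm : ∀ i, 0 ≤ m i) (ha : 2 * a + 1 ≤ 0) (hg : 0 < g)
    (hsep : ∀ i ∈ S, ∀ j ∉ S, g ≤ ‖Q i - Q j‖) (hD : ∀ i ∈ S, ∀ j ∈ S, ‖Q i - Q j‖ ≤ D) :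
    -((∑ l ∈ S, m l) ^ 2 * (∑ l, m l) * g ^ (2 * a + 1) * D) ≤
      ∑ i ∈ S, ∑ j ∈ Sᶜ, m i * ⟪pairForce m a Q i j, clusterOffset m Q S i⟫ := by
  set K := (∑ l ∈ S, m l) * g ^ (2 * a + 1) * D
  have hterm : ∀ i ∈ S, ∀ j ∈ Sᶜ,
      -(m i * m j * K) ≤ m i * ⟪pairForce m a Q i j, clusterOffset m Q S i⟫ := by
    intro i hi j hj
    have hF := norm_pairForce_le (hm j) ha hg (hsep i hi j (mem_compl.mp hj))
    have hw := norm_clusterOffset_le (fun l _ => hm l) (hD i hi)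
    calc -(m i * m j * K) = m i * -(m j * K) := by ring
      _ ≤ m i * -(‖pairForce m a Q i j‖ * ‖clusterOffset m Q S i‖) := by
        refine mul_le_mul_of_nonneg_left (neg_le_neg ?_) (hm i)
        exact (mul_le_mul hF hw (norm_nonneg _) (by positivity [hm j])).trans_eq (by ring)
      _ ≤ m i * ⟪pairForce m a Q i j, clusterOffset m Q S i⟫ :=
        mul_le_mul_of_nonneg_left (neg_le_of_abs_le (abs_real_inner_le_norm _ _)) (hm i)
  rcases S.eq_empty_or_nonempty with rfl | ⟨i, hi⟩
  · simp
  have hK : 0 ≤ K := by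
    positivity [sum_nonneg fun l (_ : l ∈ S) => hm l, (norm_nonneg _).trans (hD i hi i hi)]
  calc -((∑ l ∈ S, m l) ^ 2 * (∑ l, m l) * g ^ (2 * a + 1) * D)
      = -((∑ i ∈ S, m i) * (∑ j, m j) * K) := by ring
    _ ≤ -((∑ i ∈ S, m i) * (∑ j ∈ Sᶜ, m j) * K) := by
        gcongr
        · exact sum_nonneg fun l _ => hm l
        · exact fun l _ _ => hm l
        · exact subset_univ _
    _ = ∑ i ∈ S, ∑ j ∈ Sᶜ, -(m i * m j * K) := by
        rw [sum_mul_sum, sum_mul, ← sum_neg_distrib]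
        simp only [sum_mul, sum_neg_distrib]
    _ ≤ _ := sum_le_sum fun i hi => sum_le_sum fun j hj => hterm i hi j hj

theorem IsRelEquilibrium.cluster_bound [Fintype ι] {L : E →L[ℝ] E} (hQ : IsRelEquilibrium L m a Q)
    (hm : ∀ i, 0 < m i) (ha : 2 * a + 1 ≤ 0) {i₀ j₀ : ι} (hi₀ : i₀ ∈ S) (hj₀ : j₀ ∈ S)
    (hij : i₀ ≠ j₀) {D g : ℝ} (hD : ∀ i ∈ S, ∀ j ∈ S, ‖Q i - Q j‖ ≤ D) (hg : 0 < g)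
    (hsep : ∀ i ∈ S, ∀ j ∉ S, g ≤ ‖Q i - Q j‖) :
    2 * (m i₀ * m j₀ * (‖Q i₀ - Q j₀‖ ^ (2 * a) * ‖Q i₀ - Q j₀‖ ^ 2)) ≤
      (∑ i, m i) * D * (‖L‖ * D + 2 * (∑ i, m i) * g ^ (2 * a + 1)) := by
  classical
  set M := ∑ i, m i
  set MS := ∑ i ∈ S, m i
  have hm₀ (i : ι) : 0 ≤ m i := (hm i).le
  have hMS : 0 < MS := sum_pos' (fun i _ => hm₀ i) ⟨i₀, hi₀, hm i₀⟩
  have hMSM : MS ≤ M := sum_le_univ_sum_of_nonneg hm₀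
  have hD₀ : 0 ≤ D := (norm_nonneg _).trans (hD i₀ hi₀ i₀ hi₀)
  have hsplit : ∑ i ∈ S, m i * ⟪L (Q i), clusterOffset m Q S i⟫ =
      ∑ i ∈ S, ∑ j ∈ S, m i * ⟪pairForce m a Q i j, clusterOffset m Q S i⟫ +
        ∑ i ∈ S, ∑ j ∈ Sᶜ, m i * ⟪pairForce m a Q i j, clusterOffset m Q S i⟫ := by
    simp only [hQ _, sum_inner, mul_sum, ← sum_add_distrib, sum_add_sum_compl]
  have hL := two_mul_sum_inner_clusterOffset_le L (fun i _ => hm₀ i) hD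
  have hin := mul_le_sum_sum_mul_inner_pairForce (a := a) (Q := Q) (fun i _ => hm₀ i) hi₀ hj₀ hij
  have hout := neg_le_sum_sum_compl_mul_inner_pairForce hm₀ ha hg hsep hD
  have hMS_bound : MS * (2 * (m i₀ * m j₀ * (‖Q i₀ - Q j₀‖ ^ (2 * a) * ‖Q i₀ - Q j₀‖ ^ 2))) ≤
      MS * (MS * D * (‖L‖ * D + 2 * M * g ^ (2 * a + 1))) := by
    linarith
  refine (le_of_mul_le_mul_left hMS_bound hMS).trans ?_
  gcongr
  positivity [sum_nonneg fun i (_ : i ∈ univ) => hm₀ i]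

end Clusters

/-- Pigeonhole: the `card ι` values `d j` miss one of the `card ι + 1` disjoint intervals
`(R s, R (s + 1)]`. -/
lemma Monotone.exists_forall_le_or_lt_succ {ι : Type*} [Fintype ι] (d : ι → ℝ) {R : ℕ → ℝ}
    (hR : Monotone R) : ∃ s ≤ Fintype.card ι, ∀ j, d j ≤ R s ∨ R (s + 1) < d j := by
  by_contra! h
  choose j hj using fun s : Fin (Fintype.card ι + 1) => h s (Nat.lt_succ_iff.mp s.2)
  have hmono : StrictMono (d ∘ j) := fun s s' hss' =>
    calc d (j s) ≤ R (s + 1) := (hj s).2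
      _ ≤ R s' := hR (Nat.succ_le_of_lt hss')
      _ < d (j s') := (hj s').1
  simpa using Fintype.card_le_of_injective j hmono.injective.of_comp

/-- The gap `(β * C s) ^ (-p⁻¹)` between consecutive radii is chosen so that its `p`-th power is
`(β * C s)⁻¹` (`clusterRadius_succ_sub_rpow`): this lets the interaction across the gap be
absorbed by the interaction inside the cluster. -/
noncomputable def clusterRadius (β p : ℝ) : ℕ → ℝ
  | 0 => 1
  | s + 1 => clusterRadius β p s + (β * clusterRadius β p s) ^ (-p⁻¹)

lemma one_le_clusterRadius {β : ℝ} (hβ : 0 ≤ β) (p : ℝ) (s : ℕ) : 1 ≤ clusterRadius β p s := by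
  induction s with
  | zero => rfl
  | succ s ih =>
    have := Real.rpow_nonneg (mul_nonneg hβ (zero_le_one.trans ih)) (-p⁻¹)
    rw [clusterRadius]
    linarith

lemma strictMono_clusterRadius {β : ℝ} (hβ : 0 < β) (p : ℝ) : StrictMono (clusterRadius β p) :=
  strictMono_nat_of_lt_succ fun s => by
    have := Real.rpow_pos_of_pos (mul_pos hβ (one_pos.trans_le (one_le_clusterRadius hβ.le p s)))
      (-p⁻¹)
    rw [clusterRadius]
    linarith

lemma clusterRadius_succ_sub_rpow {β p : ℝ} (hβ : 0 ≤ β) (hp : p ≠ 0) (s : ℕ) :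
    (clusterRadius β p (s + 1) - clusterRadius β p s) ^ p = (β * clusterRadius β p s)⁻¹ := by
  have := zero_le_one.trans (one_le_clusterRadius hβ p s)
  rw [clusterRadius, add_sub_cancel_left, ← Real.rpow_mul (by positivity), neg_mul,
    inv_mul_cancel₀ hp, Real.rpow_neg_one]

lemma exists_isolated_cluster {ι E : Type*} [Fintype ι] [SeminormedAddCommGroup E] (Q : ι → E)
    (x : E) {R : ℕ → ℝ} (hR : Monotone R) :
    ∃ s ≤ Fintype.card ι, ∃ S : Finset ι, (∀ l, l ∈ S ↔ ‖Q l - x‖ ≤ R s) ∧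
      (∀ k ∈ S, ∀ l ∈ S, ‖Q k - Q l‖ ≤ 2 * R s) ∧
      ∀ k ∈ S, ∀ l ∉ S, R (s + 1) - R s ≤ ‖Q k - Q l‖ := by
  classical
  obtain ⟨s, hs, hgap⟩ := hR.exists_forall_le_or_lt_succ fun l => ‖Q l - x‖
  refine ⟨s, hs, univ.filter fun l => ‖Q l - x‖ ≤ R s, fun l => by simp, ?_, ?_⟩
  · intro k hk l hl
    simp only [mem_filter, mem_univ, true_and] at hk hl
    have := norm_sub_le_norm_sub_add_norm_sub (Q k) x (Q l)
    rw [norm_sub_rev x] at this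
    linarith
  · intro k hk l hl
    simp only [mem_filter, mem_univ, true_and] at hk hl
    have := norm_sub_le_norm_sub_add_norm_sub (Q l) (Q k) x
    rw [norm_sub_rev (Q l) (Q k)] at this
    linarith [(hgap l).resolve_left hl]

lemma exists_pos_forall_le {ι : Type*} [Finite ι] {m : ι → ℝ} (hm : ∀ i, 0 < m i) :
    ∃ μ > 0, ∀ i, μ ≤ m i := by
  cases isEmpty_or_nonempty ι
  · exact ⟨1, one_pos, isEmptyElim⟩
  · obtain ⟨i₀, hi₀⟩ := Finite.exists_min m
    exact ⟨m i₀, hm i₀, hi₀⟩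

section

variable {ι E : Type*} [Fintype ι] [NormedAddCommGroup E] [InnerProductSpace ℝ E]
  {L : E →L[ℝ] E} {m : ι → ℝ} {a : ℝ} {Q : ι → E}

theorem IsRelEquilibrium.rpow_norm_sub_le (hQ : IsRelEquilibrium L m a Q) (hm : ∀ i, 0 < m i)
    {μ : ℝ} (hμ : 0 < μ) (hμm : ∀ i, μ ≤ m i) (ha : a < -1 / 2) {i j : ι} (hQij : Q i ≠ Q j) :
    ‖Q i - Q j‖ ^ (2 * a) ≤ 4 * (∑ l, m l) * ‖L‖ *
      clusterRadius (4 * (∑ l, m l) ^ 2 / μ ^ 2) (2 * a + 1) (Fintype.card ι) ^ 2 / μ ^ 2 := by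
  set M := ∑ l, m l
  set β := 4 * M ^ 2 / μ ^ 2
  set r := ‖Q i - Q j‖
  have hr : 0 < r := norm_pos_iff.mpr (sub_ne_zero.mpr hQij)
  have hM : 0 < M := sum_pos (fun l _ => hm l) ⟨i, mem_univ _⟩
  have hβ : 0 < β := by positivity
  have hCmono := (strictMono_clusterRadius hβ (2 * a + 1)).monotone
  obtain ⟨s, hs, S, hS, hD, hsep⟩ := exists_isolated_cluster Q (Q i) (hCmono.mul_const hr.le)
  set C := clusterRadius β (2 * a + 1)
  have hC : 1 ≤ C s := one_le_clusterRadius hβ.le _ s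
  have hiS : i ∈ S := by rw [hS, sub_self, norm_zero]; positivity
  have hjS : j ∈ S := by rw [hS, norm_sub_rev]; nlinarith
  have hg : (C (s + 1) * r - C s * r) ^ (2 * a + 1) = r ^ (2 * a) * r / (β * C s) := by
    rw [← sub_mul, Real.mul_rpow (sub_nonneg.mpr (hCmono s.le_succ)) hr.le,
      clusterRadius_succ_sub_rpow hβ.le (by linarith), Real.rpow_add_one hr.ne']
    exact inv_mul_eq_div _ _
  have hgap : 0 < C (s + 1) * r - C s * r :=
    sub_pos.mpr (mul_lt_mul_of_pos_right (strictMono_clusterRadius hβ _ s.lt_succ_self) hr)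
  have key : 2 * (m i * m j * (r ^ (2 * a) * r ^ 2)) ≤ M * (2 * (C s * r)) *
      (‖L‖ * (2 * (C s * r)) + 2 * M * (C (s + 1) * r - C s * r) ^ (2 * a + 1)) :=
    hQ.cluster_bound hm (by linarith) hiS hjS (fun h => hQij (congrArg Q h)) hD hgap hsep
  rw [hg] at key
  have hR : 0 ≤ r ^ (2 * a) * r ^ 2 := by positivity
  have hμ2 : μ ^ 2 * (r ^ (2 * a) * r ^ 2) ≤ m i * m j * (r ^ (2 * a) * r ^ 2) := by
    gcongr
    rw [sq]
    exact mul_le_mul (hμm i) (hμm j) hμ.le (hm i).le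
  have hβC : M * (2 * (C s * r)) * (2 * M * (r ^ (2 * a) * r / (β * C s))) =
      μ ^ 2 * (r ^ (2 * a) * r ^ 2) := by
    simp only [β]
    field_simp
    ring
  have hr2 : r ^ (2 * a) * μ ^ 2 * r ^ 2 ≤ 4 * M * ‖L‖ * C s ^ 2 * r ^ 2 := by
    linarith
  rw [le_div_iff₀ (by positivity)]
  calc r ^ (2 * a) * μ ^ 2 ≤ 4 * M * ‖L‖ * C s ^ 2 := le_of_mul_le_mul_right hr2 (by positivity)
    _ ≤ 4 * M * ‖L‖ * C (Fintype.card ι) ^ 2 := by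
      gcongr
      exact hCmono hs

theorem exists_pos_lt_norm_sub_of_isRelEquilibrium (L : E →L[ℝ] E) (hm : ∀ i, 0 < m i)
    (ha : a < -1 / 2) :
    ∃ c > 0, ∀ Q : ι → E, IsRelEquilibrium L m a Q → ∀ i j, Q i ≠ Q j → c < ‖Q i - Q j‖ := by
  obtain ⟨μ, hμ, hμm⟩ := exists_pos_forall_le hm
  set B := 4 * (∑ l, m l) * ‖L‖ *
    clusterRadius (4 * (∑ l, m l) ^ 2 / μ ^ 2) (2 * a + 1) (Fintype.card ι) ^ 2 / μ ^ 2
  have hB : 0 ≤ B := by positivity [sum_nonneg fun l (_ : l ∈ univ) => (hm l).le]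
  refine ⟨(B + 1) ^ (2 * a)⁻¹, by positivity, fun Q hQ i j hQij => ?_⟩
  have hr : 0 < ‖Q i - Q j‖ := norm_pos_iff.mpr (sub_ne_zero.mpr hQij)
  rw [← Real.rpow_lt_rpow_iff_of_neg hr (by positivity) (by linarith : 2 * a < 0),
    ← Real.rpow_mul (by positivity), inv_mul_cancel₀ (by linarith), Real.rpow_one]
  exact (hQ.rpow_norm_sub_le hm hμ hμm ha hQij).trans_lt (lt_add_one B)

end

theorem main_lower_bound_general {k n : ℕ} (A : Fin (k / 2) → ℝ)
    (m : Fin n → ℝ) (hm : ∀ i, 0 < m i) (a : ℝ) (ha : a < -1/2) :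
    ∃ c > (0 : ℝ), ∀ Q : Fin n → EuclideanSpace ℝ (Fin k),
      (∀ i j, i ≠ j → Q i ≠ Q j) →
      (∀ i, mulVecE ((Amat k A) ^ 2) (Q i) =
        ∑ j ∈ Finset.univ.filter (· ≠ i), (m j * ‖Q i - Q j‖ ^ (2 * a)) • (Q i - Q j)) →
      ∀ i j, i ≠ j → c < ‖Q i - Q j‖ := by
  obtain ⟨c, hc, hbound⟩ :=
    exists_pos_lt_norm_sub_of_isRelEquilibrium (toEuclideanCLM (𝕜 := ℝ) (Amat k A ^ 2)) hm ha
  refine ⟨c, hc, fun Q hQd hQ i j hij => hbound Q (fun l => ?_) i j (hQd i j hij)⟩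
  exact (hQ l).trans (sum_filter_of_ne fun j _ hj => by rintro rfl; simp at hj)

/-- Main Theorem: a universal positive lower bound on mutual distances of
relative equilibria with given masses and rotation. -/
theorem main_lower_bound {k n : ℕ} (hn : 3 ≤ n) (A : Fin (k / 2) → ℝ) (hA : ∀ s, 0 < A s)
    (m : Fin n → ℝ) (hm : ∀ i, 0 < m i) (a : ℝ) (ha : a < -1/2) :
    ∃ c > (0 : ℝ), ∀ Q : Fin n → EuclideanSpace ℝ (Fin k),
      (∀ i j, i ≠ j → Q i ≠ Q j) →
      (∀ i, mulVecE ((Amat k A) ^ 2) (Q i) =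
        ∑ j ∈ Finset.univ.filter (· ≠ i), (m j * ‖Q i - Q j‖ ^ (2 * a)) • (Q i - Q j)) →
      ∀ i j, i ≠ j → c < ‖Q i - Q j‖ :=
  main_lower_bound_general A m hm a ha
end
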